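/- Let g ∈ GL(d,ℝ) with a₂(g)/a₁(g) < 1, and let w ∈ ℝ^d be a unit vector. Then ‖g*w‖/‖g*‖ ≤ d(u(g), w^⊥) + a₂(g)/a₁(g), where d(u(g), w^⊥) denotes the gap distance from the direction of maximum growth of g to the projective hyperplane orthogonal to w. -/

import Mathlib

/-!
Write `gᵀ = Rᵀ Δ Lᵀ`, `u = L e₀` and `y = Lᵀ w`, so that `y₀ = ⟪u, w⟫`. Then
`‖gᵀ w‖ = ‖Δ y‖ ≤ a₀ |y₀| + a₁`, while `‖gᵀ‖ ≥ ‖gᵀ u‖ = a₀`; dividing gives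
`‖gᵀ w‖ / ‖gᵀ‖ ≤ |⟪u, w⟫| + a₁ / a₀`. Finally `|⟪u, w⟫|` is the sine of the angle between `u`
and the hyperplane `w^⊥`, hence at most the gap distance from `u` to any point of `w^⊥`.
-/

open scoped RealInnerProductSpace
open Filter

noncomputable section

/-- Euclidean space `ℝ^d`. -/
abbrev E (d : ℕ) := EuclideanSpace ℝ (Fin d)

/-- The operator norm of a `d × d` real matrix, acting on Euclidean space. -/
def opNorm {d : ℕ} (g : Matrix (Fin d) (Fin d) ℝ) : ℝ :=
  ‖(Matrix.toEuclideanLin g).toContinuousLinearMap‖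

/-- The action of a matrix on a Euclidean vector. -/
def act {d : ℕ} (g : Matrix (Fin d) (Fin d) ℝ) (v : E d) : E d :=
  Matrix.toEuclideanLin g v

/-- The norm of `v ∧ w` in `Λ² ℝ^d`. -/
def wedgeNorm {d : ℕ} (v w : E d) : ℝ :=
  Real.sqrt (‖v‖ ^ 2 * ‖w‖ ^ 2 - ⟪v, w⟫ ^ 2)

/-- The gap distance `d(v̄, w̄) = ‖v ∧ w‖ / (‖v‖ ‖w‖)` on projective space. -/
def gapDist {d : ℕ} (v w : E d) : ℝ := wedgeNorm v w / (‖v‖ * ‖w‖)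

/-- The operator norm of `Λ² g`, computed on the decomposable generators coming from
orthonormal pairs. -/
def lam2Norm {d : ℕ} (g : Matrix (Fin d) (Fin d) ℝ) : ℝ :=
  sSup {r | ∃ v w : E d, ‖v‖ = 1 ∧ ‖w‖ = 1 ∧ ⟪v, w⟫ = 0 ∧
    r = wedgeNorm (act g v) (act g w)}

/-- Spectral radius: the maximal absolute value of the complex eigenvalues. -/
def specRad {d : ℕ} (g : Matrix (Fin d) (Fin d) ℝ) : ℝ :=
  sSup ((fun z : ℂ => ‖z‖) '' spectrum ℂ (g.map (algebraMap ℝ ℂ)))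

/-- Singular value decomposition data: `g = L Δ R` with `L, R` orthogonal and
`Δ = diagonal a`, the `a i` positive and in decreasing order (so `a i = a_{i+1}(g)`). -/
structure SVD {d : ℕ} (g : Matrix (Fin d) (Fin d) ℝ) (L : Matrix (Fin d) (Fin d) ℝ)
    (a : Fin d → ℝ) (R : Matrix (Fin d) (Fin d) ℝ) : Prop where
  orthL : L * L.transpose = 1
  orthR : R * R.transpose = 1
  anti : Antitone a
  pos : ∀ i, 0 < a i
  eq : g = L * Matrix.diagonal a * R

/-- The `i`-th standard basis vector of `ℝ^d`. -/
def stdVec {d : ℕ} (i : Fin d) : E d := EuclideanSpace.single i 1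


section Act

variable {d : ℕ}

lemma act_mul (A B : Matrix (Fin d) (Fin d) ℝ) (v : E d) :
    act (A * B) v = act A (act B v) := by
  simp [act, Matrix.toLpLin_apply, Matrix.mulVec_mulVec]

lemma act_one (v : E d) : act 1 v = v := by
  simp [act]

lemma act_diagonal_apply (a : Fin d → ℝ) (y : E d) (i : Fin d) :
    act (Matrix.diagonal a) y i = a i * y i :=
  Matrix.mulVec_diagonal a y i

lemma inner_act_left (A : Matrix (Fin d) (Fin d) ℝ) (v u : E d) :
    ⟪act A v, u⟫ = ⟪v, act A.transpose u⟫ := by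
  rw [act, act, ← Matrix.conjTranspose_eq_transpose_of_trivial,
    Matrix.toEuclideanLin_conjTranspose_eq_adjoint, LinearMap.adjoint_inner_right]

lemma inner_act_act_of_transpose_mul_self (A : Matrix (Fin d) (Fin d) ℝ)
    (hA : A.transpose * A = 1) (v u : E d) : ⟪act A v, act A u⟫ = ⟪v, u⟫ := by
  rw [inner_act_left, ← act_mul, hA, act_one]

lemma norm_act_of_transpose_mul_self (A : Matrix (Fin d) (Fin d) ℝ)
    (hA : A.transpose * A = 1) (v : E d) : ‖act A v‖ = ‖v‖ := by
  simpa only [real_inner_self_eq_norm_sq, sq_eq_sq₀ (norm_nonneg _) (norm_nonneg _)]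
    using inner_act_act_of_transpose_mul_self A hA v v

lemma norm_act_le_opNorm_mul (A : Matrix (Fin d) (Fin d) ℝ) (v : E d) :
    ‖act A v‖ ≤ opNorm A * ‖v‖ :=
  (Matrix.toEuclideanLin A).toContinuousLinearMap.le_opNorm v

end Act

lemma norm_act_diagonal_le {d : ℕ} (a : Fin d → ℝ) (i : Fin d) {b : ℝ} (hb : 0 ≤ b)
    (hab : ∀ j ≠ i, |a j| ≤ b) (y : E d) :
    ‖act (Matrix.diagonal a) y‖ ≤ |a i| * |y i| + b * ‖y‖ := by
  have hsq : ‖act (Matrix.diagonal a) y‖ ^ 2 ≤ (a i * y i) ^ 2 + b ^ 2 * ‖y‖ ^ 2 := by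
    have hrest : ∑ j ∈ Finset.univ.erase i, (a j * y j) ^ 2 ≤ b ^ 2 * ∑ j, y j ^ 2 := by
      rw [Finset.mul_sum]
      calc ∑ j ∈ Finset.univ.erase i, (a j * y j) ^ 2
          ≤ ∑ j ∈ Finset.univ.erase i, b ^ 2 * y j ^ 2 := by
            refine Finset.sum_le_sum fun j hj => ?_
            rw [mul_pow, ← sq_abs (a j)]
            gcongr
            exact hab j (Finset.ne_of_mem_erase hj)
        _ ≤ ∑ j, b ^ 2 * y j ^ 2 :=
            Finset.sum_le_sum_of_subset_of_nonneg (Finset.erase_subset _ _)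
              fun _ _ _ => by positivity
    simp only [EuclideanSpace.real_norm_sq_eq, act_diagonal_apply,
      ← Finset.add_sum_erase _ _ (Finset.mem_univ i)] at hrest ⊢
    linarith
  refine le_of_pow_le_pow_left₀ two_ne_zero (by positivity) (hsq.trans ?_)
  rw [mul_pow, ← sq_abs (a i), ← sq_abs (y i)]
  nlinarith [mul_nonneg (mul_nonneg (abs_nonneg (a i)) (abs_nonneg (y i)))
    (mul_nonneg hb (norm_nonneg y))]

lemma abs_inner_le_gapDist {d : ℕ} {u w x : E d} (hu : ‖u‖ = 1) (hw : ‖w‖ = 1)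
    (hx : x ≠ 0) (hxw : ⟪x, w⟫ = 0) : |⟪u, w⟫| ≤ gapDist u x := by
  set c := ⟪u, w⟫
  -- `u - c • w` is the projection of `u` onto `w^⊥`, which contains `x`.
  have hproj : ⟪u, x⟫ ^ 2 ≤ (1 - c ^ 2) * ‖x‖ ^ 2 := by
    have hinner : ⟪u - c • w, x⟫ = ⟪u, x⟫ := by
      rw [inner_sub_left, real_inner_smul_left, real_inner_comm x w, hxw, mul_zero, sub_zero]
    have hnorm : ‖u - c • w‖ ^ 2 = 1 - c ^ 2 := by
      rw [norm_sub_sq_real, real_inner_smul_right, norm_smul, hu, hw, Real.norm_eq_abs]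
      ring_nf
      rw [sq_abs]
      ring
    calc ⟪u, x⟫ ^ 2 = ⟪u - c • w, x⟫ ^ 2 := by rw [hinner]
      _ ≤ (‖u - c • w‖ * ‖x‖) ^ 2 := by
        rw [← sq_abs]; exact pow_le_pow_left₀ (abs_nonneg _) (abs_real_inner_le_norm _ _) 2
      _ = (1 - c ^ 2) * ‖x‖ ^ 2 := by rw [mul_pow, hnorm]
  have hx0 : 0 < ‖x‖ := norm_pos_iff.mpr hx
  rw [gapDist, wedgeNorm, hu, one_mul, one_pow, one_mul, le_div_iff₀ hx0,
    ← Real.sqrt_sq (norm_nonneg x), ← Real.sqrt_sq_eq_abs, ← Real.sqrt_mul (sq_nonneg c),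
    Real.sqrt_sq (norm_nonneg x)]
  exact Real.sqrt_le_sqrt (by nlinarith)

lemma exists_ne_zero_inner_eq_zero {V : Type*} [NormedAddCommGroup V] [InnerProductSpace ℝ V]
    [FiniteDimensional ℝ V] (hV : 1 < Module.finrank ℝ V) (w : V) :
    ∃ x : V, x ≠ 0 ∧ ⟪x, w⟫ = 0 := by
  have hdim : 0 < Module.finrank ℝ (ℝ ∙ w)ᗮ := by
    have := (ℝ ∙ w).finrank_add_finrank_orthogonal
    have : Module.finrank ℝ (ℝ ∙ w) ≤ 1 := by simpa using finrank_span_le_card (R := ℝ) {w}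
    omega
  obtain ⟨x, hx, hx0⟩ :=
    Submodule.exists_mem_ne_zero_of_ne_bot (Submodule.one_le_finrank_iff.mp hdim)
  exact ⟨x, hx0, Submodule.mem_orthogonal_singleton_iff_inner_left.mp hx⟩

lemma abs_inner_le_sInf_gapDist {d : ℕ} (hd : 1 < d) {u w : E d} (hu : ‖u‖ = 1)
    (hw : ‖w‖ = 1) :
    |⟪u, w⟫| ≤ sInf {r | ∃ x : E d, x ≠ 0 ∧ ⟪x, w⟫ = 0 ∧ r = gapDist u x} := by
  obtain ⟨x₀, hx₀, hx₀w⟩ := exists_ne_zero_inner_eq_zero (by simp; omega) w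
  refine le_csInf ⟨_, x₀, hx₀, hx₀w, rfl⟩ ?_
  rintro r ⟨x, hx, hxw, rfl⟩
  exact abs_inner_le_gapDist hu hw hx hxw

namespace SVD

variable {d : ℕ} {g L R : Matrix (Fin d) (Fin d) ℝ} {a : Fin d → ℝ}

lemma act_transpose (h : SVD g L a R) (v : E d) :
    act g.transpose v = act R.transpose (act (Matrix.diagonal a) (act L.transpose v)) := by
  rw [h.eq, Matrix.transpose_mul, Matrix.transpose_mul, Matrix.diagonal_transpose, act_mul, act_mul]

lemma norm_act_transpose (h : SVD g L a R) (v : E d) :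
    ‖act g.transpose v‖ = ‖act (Matrix.diagonal a) (act L.transpose v)‖ := by
  rw [h.act_transpose,
    norm_act_of_transpose_mul_self _ (by rw [Matrix.transpose_transpose, h.orthR])]

lemma le_opNorm_transpose (h : SVD g L a R) (i : Fin d) : a i ≤ opNorm g.transpose := by
  have hL : L.transpose * L = 1 := mul_eq_one_comm.mp h.orthL
  have hei : ‖stdVec i‖ = 1 := by simp [stdVec]
  have hgu : ‖act g.transpose (act L (stdVec i))‖ = a i := by
    have hdiag : act (Matrix.diagonal a) (stdVec i) = a i • stdVec i := by
      ext j
      rw [act_diagonal_apply]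
      by_cases hji : j = i <;> simp [stdVec, hji]
    rw [h.norm_act_transpose, ← act_mul L.transpose, hL, act_one, hdiag, norm_smul, hei, mul_one,
      Real.norm_of_nonneg (h.pos i).le]
  simpa [hgu, norm_act_of_transpose_mul_self L hL, hei] using
    norm_act_le_opNorm_mul g.transpose (act L (stdVec i))

lemma norm_act_transpose_le (h : SVD g L a R) (hd : 1 < d) (w : E d) :
    ‖act g.transpose w‖ ≤ a ⟨0, Nat.zero_lt_of_lt hd⟩ *
      |⟪act L (stdVec ⟨0, Nat.zero_lt_of_lt hd⟩), w⟫| + a ⟨1, hd⟩ * ‖w‖ := by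
  set y := act L.transpose w
  have hy : ‖y‖ = ‖w‖ :=
    norm_act_of_transpose_mul_self _ (by rw [Matrix.transpose_transpose, h.orthL]) w
  have hinner : ⟪act L (stdVec ⟨0, by omega⟩), w⟫ = y ⟨0, by omega⟩ := by
    rw [inner_act_left, stdVec, EuclideanSpace.inner_single_left, map_one, one_mul]
  have hsmall : ∀ j ≠ ⟨0, by omega⟩, |a j| ≤ a ⟨1, by omega⟩ := fun j hj => by
    rw [abs_of_pos (h.pos j)]
    exact h.anti (Fin.le_iff_val_le_val.mpr (Nat.one_le_iff_ne_zero.mpr (Fin.val_ne_of_ne hj)))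
  rw [h.norm_act_transpose, hinner, ← hy, ← abs_of_pos (h.pos ⟨0, by omega⟩)]
  exact norm_act_diagonal_le a _ (h.pos _).le hsmall y

end SVD

/-- For `g ∈ GL(d,ℝ)` with `a₂(g)/a₁(g) < 1` and a unit vector `w`,
`‖g*w‖/‖g*‖ ≤ d(u(g), w^⊥) + a₂(g)/a₁(g)`, where `u(g) = [L e₁]` and `d(u(g), w^⊥)` is the
infimum of gap distances from `u(g)` to projective points of the hyperplane `w^⊥`. -/
theorem stmt_3 {d : ℕ} (hd : 2 ≤ d) (g L R : Matrix (Fin d) (Fin d) ℝ)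
    (a : Fin d → ℝ) (h : SVD g L a R)
    (w : E d) (hw : ‖w‖ = 1) :
    ‖act g.transpose w‖ / opNorm g.transpose ≤
      sInf {r | ∃ x : E d, x ≠ 0 ∧ ⟪x, w⟫ = 0 ∧
          r = gapDist (act L (stdVec ⟨0, by omega⟩)) x} +
        a ⟨1, by omega⟩ / a ⟨0, by omega⟩ := by
  set u := act L (stdVec ⟨0, by omega⟩)
  have hu : ‖u‖ = 1 := by
    rw [norm_act_of_transpose_mul_self L (mul_eq_one_comm.mp h.orthL)]
    simp [stdVec]
  have ha₀ := h.pos ⟨0, by omega⟩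
  have ha₁ := h.pos ⟨1, by omega⟩
  calc ‖act g.transpose w‖ / opNorm g.transpose
      ≤ (a ⟨0, by omega⟩ * |⟪u, w⟫| + a ⟨1, by omega⟩) / a ⟨0, by omega⟩ := by
        have := h.norm_act_transpose_le hd w
        rw [hw, mul_one] at this
        exact div_le_div₀ (by positivity) this ha₀ (h.le_opNorm_transpose _)
    _ = |⟪u, w⟫| + a ⟨1, by omega⟩ / a ⟨0, by omega⟩ := by field_simp
    _ ≤ _ := by gcongr; exact abs_inner_le_sInf_gapDist hd hu hw
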